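/- arXiv:2006.06318 — 4 statements merged into one kernel-verified Lean document; each statement's English description precedes it below -/
import Mathlib

section
/- Fix α > −1 and t > 0. Suppose (a_N, b_N) are sequences with 0 < a_N < b_N satisfying the Coulomb-fluid endpoint conditions t(a_N+b_N)/(2 (a_N b_N)^{3/2}) + α/√(a_N b_N) = 1 and (a_N+b_N)/2 − t/√(a_N b_N) − α = 2N, and a_N → 0 as N → ∞. Then there exist a constant C > 0 and N₀ such that for all N ≥ N₀, | a_N − [ t^{2/3}/(2(2N+α)^{1/3}) + α t^{1/3}/(3(2N+α)^{2/3}) + α²/(6(2N+α)) ] | ≤ C (2N+α)^{−4/3}. -/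
open Real Filter

/-
Put `s = √(a b)` and `n = 2N + α`. The two endpoint conditions say that `a + b = 2n + 2t/s` and
that `s` solves `s³ - α s² - t²/s = t n =: u³`. For `x ≥ max(α, 0)` the left-hand side grows
at least like `x²` times the increment of `x`, so the root lies within `O(u⁻²)` of
`u + α/3 + α²/(9u)`, at which the equation has a bounded defect; hence
`s² = u² + 2αu/3 + α²/3 + O(u⁻¹)`. As `a` is the smaller root of `x² - (a + b) x + s²`, it is
`s²/(2n) + O(u/n²)`, and with `u = t^{1/3} n^{1/3}` this is the stated expansion.
-/

noncomputable def endpointFun (α t x : ℝ) : ℝ := x ^ 3 - α * x ^ 2 - t ^ 2 / x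

noncomputable def approxRoot (α u : ℝ) : ℝ := u + α / 3 + α ^ 2 / (9 * u)

section EndpointFun

variable {α t : ℝ}

theorem endpointFun_sub_ge {x y : ℝ} (hx : 0 < x) (hαx : α ≤ x) (hxy : x ≤ y) :
    (y - x) * y ^ 2 ≤ endpointFun α t y - endpointFun α t x := by
  have hy : 0 < y := hx.trans_le hxy
  have key : endpointFun α t y - endpointFun α t x - (y - x) * y ^ 2
      = (y - x) * (x * (x - α) + y * (x - α) + t ^ 2 / (x * y)) := by
    unfold endpointFun; field_simp; ring
  have : 0 ≤ (y - x) * (x * (x - α) + y * (x - α) + t ^ 2 / (x * y)) := by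
    apply mul_nonneg (by linarith)
    have := mul_nonneg hx.le (sub_nonneg.2 hαx)
    have := mul_nonneg hy.le (sub_nonneg.2 hαx)
    positivity
  linarith

theorem abs_sub_mul_sq_le_abs_endpointFun_sub {r x y : ℝ} (hr : 0 < r) (hαr : α ≤ r)
    (hx : r ≤ x) (hy : r ≤ y) :
    |y - x| * r ^ 2 ≤ |endpointFun α t y - endpointFun α t x| := by
  wlog hxy : x ≤ y generalizing x y
  · rw [abs_sub_comm, abs_sub_comm (endpointFun α t y)]
    exact this hy hx (le_of_not_ge hxy)
  have hgrowth := endpointFun_sub_ge (t := t) (hr.trans_le hx) (hαr.trans hx) hxy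
  rw [abs_of_nonneg (sub_nonneg.2 hxy), abs_of_nonneg (by nlinarith)]
  calc (y - x) * r ^ 2 ≤ (y - x) * y ^ 2 := by gcongr
    _ ≤ _ := hgrowth

theorem half_lt_of_endpointFun_eq {u s : ℝ} (hu : 2 * |α| ≤ u) (hs : 0 < s)
    (h : endpointFun α t s = u ^ 3) : u / 2 < s := by
  by_contra! hsu
  have hαu : -α ≤ u / 2 := by linarith [neg_abs_le α]
  have hupper : endpointFun α t s ≤ s ^ 2 * u := by
    have : s ^ 2 * (s - α) ≤ s ^ 2 * u := by gcongr; linarith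
    unfold endpointFun
    have : 0 ≤ t ^ 2 / s := by positivity
    nlinarith
  have hu0 : 0 < u := by linarith
  have : s ^ 2 * u ≤ (u / 2) ^ 2 * u := by gcongr
  nlinarith [pow_pos hu0 3]

theorem abs_sub_le_of_endpointFun_eq {u s c B : ℝ} (hu : 0 < u) (hαu : 2 * |α| ≤ u)
    (hs : 0 < s) (hφs : endpointFun α t s = u ^ 3) (hc : u / 2 ≤ c)
    (hφc : |endpointFun α t c - u ^ 3| ≤ B) : |s - c| ≤ 4 * B / u ^ 2 := by
  have hsu := half_lt_of_endpointFun_eq hαu hs hφs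
  have h := abs_sub_mul_sq_le_abs_endpointFun_sub (α := α) (t := t) (half_pos hu)
    (by linarith [le_abs_self α]) hc hsu.le
  rw [hφs, abs_sub_comm (u ^ 3)] at h
  rw [le_div_iff₀ (by positivity)]
  linarith

theorem half_le_approxRoot {u : ℝ} (hu : 2 * |α| ≤ u) : u / 2 ≤ approxRoot α u := by
  have hu0 : 0 ≤ u := by linarith [abs_nonneg α]
  have : 0 ≤ α ^ 2 / (9 * u) := by positivity
  unfold approxRoot
  linarith [neg_abs_le α]

theorem abs_approxRoot_sub_le {u : ℝ} (hu : 1 ≤ u) :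
    |approxRoot α u - u| ≤ |α| / 3 + α ^ 2 / 9 := by
  have : α ^ 2 / (9 * u) ≤ α ^ 2 / 9 := by gcongr; linarith
  calc |approxRoot α u - u| = |α / 3 + α ^ 2 / (9 * u)| := by unfold approxRoot; ring_nf
    _ ≤ |α / 3| + |α ^ 2 / (9 * u)| := abs_add_le _ _
    _ ≤ |α| / 3 + α ^ 2 / 9 := by
      rw [abs_div, abs_of_pos (by norm_num : (0 : ℝ) < 3),
        abs_of_nonneg (by positivity : 0 ≤ α ^ 2 / (9 * u))]
      linarith

theorem abs_approxRoot_sq_sub_le {u : ℝ} (hu : 1 ≤ u) :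
    |approxRoot α u ^ 2 - (u ^ 2 + 2 * α * u / 3 + α ^ 2 / 3)|
      ≤ (2 * |α| ^ 3 / 27 + α ^ 4 / 81) / u := by
  have hu0 : 0 < u := by linarith
  have hsq : approxRoot α u ^ 2 - (u ^ 2 + 2 * α * u / 3 + α ^ 2 / 3)
      = (2 * α ^ 3 / 27 + α ^ 4 / (81 * u)) / u := by
    unfold approxRoot; field_simp; ring
  have : α ^ 4 / (81 * u) ≤ α ^ 4 / 81 := by gcongr; linarith
  rw [hsq, abs_div, abs_of_pos hu0]
  gcongr
  calc |2 * α ^ 3 / 27 + α ^ 4 / (81 * u)| ≤ |2 * α ^ 3 / 27| + |α ^ 4 / (81 * u)| :=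
        abs_add_le _ _
    _ ≤ 2 * |α| ^ 3 / 27 + α ^ 4 / 81 := by
      rw [abs_of_nonneg (by positivity : 0 ≤ α ^ 4 / (81 * u))]
      simp only [abs_div, abs_mul, abs_pow, abs_two]
      norm_num
      linarith

/-- At `c = approxRoot α u`, `c³ - α c² - u³` is a polynomial in `1/u ∈ (0, 1]`, hence bounded. -/
theorem exists_abs_endpointFun_approxRoot_sub_le (α t : ℝ) :
    ∃ B, ∀ u, 1 ≤ u → 2 * |α| ≤ u → |endpointFun α t (approxRoot α u) - u ^ 3| ≤ B := by
  obtain ⟨B, hB⟩ := (isCompact_Icc (a := (0 : ℝ)) (b := 1)).exists_bound_of_continuousOn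
    (f := fun v => α ^ 4 * v / 27 + (α / 3 + α ^ 2 * v / 9) ^ 2 * (α ^ 2 * v / 9 - 2 * α / 3))
    (by fun_prop)
  refine ⟨B + 2 * t ^ 2, fun u hu1 hαu => ?_⟩
  set c := approxRoot α u with hc
  have hc0 : 0 < c := by linarith [half_le_approxRoot hαu]
  have hcube : c ^ 3 - α * c ^ 2 - u ^ 3
      = α ^ 4 * u⁻¹ / 27 + (α / 3 + α ^ 2 * u⁻¹ / 9) ^ 2 * (α ^ 2 * u⁻¹ / 9 - 2 * α / 3) := by
    rw [hc, approxRoot]; field_simp; ring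
  have hpoly := hB u⁻¹ ⟨by positivity, inv_le_one_of_one_le₀ hu1⟩
  rw [Real.norm_eq_abs, ← hcube] at hpoly
  have ht : t ^ 2 / c ≤ 2 * t ^ 2 := by
    rw [div_le_iff₀ hc0]; nlinarith [sq_nonneg t, half_le_approxRoot hαu]
  have : 0 ≤ t ^ 2 / c := by positivity
  calc |endpointFun α t c - u ^ 3| = |(c ^ 3 - α * c ^ 2 - u ^ 3) - t ^ 2 / c| := by
        unfold endpointFun; ring_nf
    _ ≤ |c ^ 3 - α * c ^ 2 - u ^ 3| + |t ^ 2 / c| := abs_sub _ _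
    _ ≤ B + 2 * t ^ 2 := by rw [abs_of_nonneg this]; linarith

theorem exists_endpointFun_root_sq_approx (α t : ℝ) :
    ∃ u₀ K, 0 ≤ K ∧ ∀ u ≥ u₀, ∀ s, 0 < s → endpointFun α t s = u ^ 3 →
      s ≤ 2 * u ∧ |s ^ 2 - (u ^ 2 + 2 * α * u / 3 + α ^ 2 / 3)| ≤ K / u := by
  obtain ⟨B, hB⟩ := exists_abs_endpointFun_approxRoot_sub_le α t
  set K := 4 * |B|
  have hK0 : 0 ≤ K := by positivity
  refine ⟨max (max 1 (2 * |α|)) (|α| / 3 + α ^ 2 / 9 + K),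
    4 * K + 2 * |α| ^ 3 / 27 + α ^ 4 / 81, by positivity, fun u hu s hs hφs => ?_⟩
  obtain ⟨⟨hu1, hαu⟩, hu⟩ : (1 ≤ u ∧ 2 * |α| ≤ u) ∧ |α| / 3 + α ^ 2 / 9 + K ≤ u := by
    simpa only [ge_iff_le, max_le_iff] using hu
  have hu0 : 0 < u := by linarith
  set c := approxRoot α u
  have hcu : u / 2 ≤ c := half_le_approxRoot hαu
  have hsc : |s - c| ≤ K / u ^ 2 :=
    abs_sub_le_of_endpointFun_eq hu0 hαu hs hφs hcu ((hB u hu1 hαu).trans (le_abs_self B))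
  have hKu : K / u ^ 2 ≤ K := div_le_self hK0 (one_le_pow₀ hu1)
  have hcA : |c - u| ≤ |α| / 3 + α ^ 2 / 9 := abs_approxRoot_sub_le hu1
  have hc2u : c ≤ 2 * u := by linarith [le_abs_self (c - u)]
  have hs2u : s ≤ 2 * u := by linarith [le_abs_self (c - u), le_abs_self (s - c)]
  refine ⟨hs2u, ?_⟩
  calc |s ^ 2 - (u ^ 2 + 2 * α * u / 3 + α ^ 2 / 3)|
      = |(s - c) * (s + c) + (c ^ 2 - (u ^ 2 + 2 * α * u / 3 + α ^ 2 / 3))| := by ring_nf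
    _ ≤ |(s - c) * (s + c)| + |c ^ 2 - (u ^ 2 + 2 * α * u / 3 + α ^ 2 / 3)| := abs_add_le _ _
    _ = |s - c| * (s + c) + |c ^ 2 - (u ^ 2 + 2 * α * u / 3 + α ^ 2 / 3)| := by
        rw [abs_mul, abs_of_pos (by linarith : 0 < s + c)]
    _ ≤ K / u ^ 2 * (4 * u) + (2 * |α| ^ 3 / 27 + α ^ 4 / 81) / u :=
        add_le_add (mul_le_mul hsc (by linarith) (by linarith) (by positivity))
          (abs_approxRoot_sq_sub_le hu1)
    _ = (4 * K + 2 * |α| ^ 3 / 27 + α ^ 4 / 81) / u := by field_simp; ring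

end EndpointFun

theorem rpow_div_three_eq_pow {x : ℝ} (hx : 0 ≤ x) (k : ℕ) :
    x ^ ((k : ℝ) / 3) = (x ^ ((1 : ℝ) / 3)) ^ k := by
  rw [← Real.rpow_natCast, ← Real.rpow_mul hx]; ring_nf

theorem endpointFun_sqrt_eq_of_endpoint_conditions {α t m a b : ℝ} (ha : 0 < a) (hb : 0 < b)
    (h₁ : t * (a + b) / (2 * (a * b) ^ ((3 : ℝ) / 2)) + α / √(a * b) = 1)
    (h₂ : (a + b) / 2 - t / √(a * b) - α = m) :
    endpointFun α t √(a * b) = t * (m + α) ∧ a + b = 2 * (m + α) + 2 * t / √(a * b) := by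
  have hab : 0 < a * b := mul_pos ha hb
  rw [Real.rpow_div_two_eq_sqrt 3 hab.le] at h₁
  set s := √(a * b)
  have hs : 0 < s := Real.sqrt_pos.2 hab
  have hsum : a + b = 2 * (m + α) + 2 * t / s := by linear_combination 2 * h₂
  refine ⟨?_, hsum⟩
  rw [hsum] at h₁
  norm_num at h₁
  unfold endpointFun
  field_simp at h₁ ⊢
  linear_combination -h₁

theorem abs_sub_div_le_of_mul_eq_of_add_eq {a b p n e : ℝ} (ha : 0 < a) (hab : a ≤ b)
    (hn : 0 < n) (he : 0 ≤ e) (hp : a * b = p) (hs : a + b = 2 * n + e) :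
    |a - p / (2 * n)| ≤ p ^ 2 / (2 * n ^ 3) + p * e / (4 * n ^ 2) := by
  have hb : 0 < b := ha.trans_le hab
  have hnb : n ≤ b := by linarith
  have hsum : 2 * n ≤ a + b := by linarith
  have hp0 : 0 ≤ p := hp ▸ (mul_pos ha hb).le
  have hsplit : a - p / (2 * n) = a ^ 2 / (a + b) - p * e / (2 * n * (a + b)) := by
    rw [← hp, show e = a + b - 2 * n by linarith]
    field_simp
    ring
  have hsq : a ^ 2 / (a + b) ≤ p ^ 2 / (2 * n ^ 3) := by
    have han : a * n ≤ p := hp ▸ by gcongr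
    rw [div_le_div_iff₀ (by linarith) (by positivity)]
    nlinarith [mul_le_mul han han (by positivity) hp0]
  have hlin : p * e / (2 * n * (a + b)) ≤ p * e / (4 * n ^ 2) := by
    apply div_le_div_of_nonneg_left (by positivity) (by positivity)
    nlinarith
  have h₁ : 0 ≤ a ^ 2 / (a + b) := by positivity
  have h₂ : 0 ≤ p * e / (2 * n * (a + b)) := by positivity
  rw [hsplit, abs_le]
  constructor <;> linarith

theorem abs_smaller_endpoint_sub_le_of_sq_approx {α t u n s a b K : ℝ} (ht : 0 < t)
    (hu : 0 < u) (hn : 0 < n) (hs : 0 < s) (hcube : u ^ 3 = t * n) (hs2u : s ≤ 2 * u)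
    (hsq : |s ^ 2 - (u ^ 2 + 2 * α * u / 3 + α ^ 2 / 3)| ≤ K / u)
    (ha : 0 < a) (hab : a ≤ b) (hp : a * b = s ^ 2) (hsum : a + b = 2 * n + 2 * t / s) :
    |a - (u ^ 2 + 2 * α * u / 3 + α ^ 2 / 3) / (2 * n)| ≤ 9 * t * u / n ^ 2 + K / (2 * n * u) := by
  have hroot := abs_sub_div_le_of_mul_eq_of_add_eq ha hab hn (by positivity) hp hsum
  have hquartic : (s ^ 2) ^ 2 / (2 * n ^ 3) ≤ 8 * t * u / n ^ 2 := by
    have : (s ^ 2) ^ 2 ≤ (2 * u) ^ 4 := by rw [← pow_mul]; gcongr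
    rw [div_le_div_iff₀ (by positivity) (by positivity)]
    have h16 : (2 * u) ^ 4 * n ^ 2 = 8 * t * u * (2 * n ^ 3) := by
      linear_combination 16 * u * n ^ 2 * hcube
    nlinarith [pow_pos hn 2]
  have hlinear : s ^ 2 * (2 * t / s) / (4 * n ^ 2) ≤ t * u / n ^ 2 := by
    rw [show s ^ 2 * (2 * t / s) / (4 * n ^ 2) = t * s / (2 * n ^ 2) by field_simp; ring]
    rw [div_le_div_iff₀ (by positivity) (by positivity)]
    nlinarith [mul_pos ht (pow_pos hn 2)]
  have hmain : |s ^ 2 / (2 * n) - (u ^ 2 + 2 * α * u / 3 + α ^ 2 / 3) / (2 * n)|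
      ≤ K / (2 * n * u) := by
    have h2n : 0 < 2 * n := by positivity
    rw [← sub_div, abs_div, abs_of_pos h2n, div_le_div_iff₀ h2n (by positivity)]
    have := (le_div_iff₀ hu).1 hsq
    calc _ = |s ^ 2 - (u ^ 2 + 2 * α * u / 3 + α ^ 2 / 3)| * u * (2 * n) := by ring
      _ ≤ K * (2 * n) := by gcongr
  calc _ ≤ |a - s ^ 2 / (2 * n)|
        + |s ^ 2 / (2 * n) - (u ^ 2 + 2 * α * u / 3 + α ^ 2 / 3) / (2 * n)| := abs_sub_le _ _ _
    _ ≤ 9 * t * u / n ^ 2 + K / (2 * n * u) := by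
        have : 9 * t * u / n ^ 2 = 8 * t * u / n ^ 2 + t * u / n ^ 2 := by ring
        linarith

theorem leading_terms_eq_div (α : ℝ) {t n : ℝ} (ht : 0 ≤ t) (hn : 0 < n) :
    t ^ ((2 : ℝ) / 3) / (2 * n ^ ((1 : ℝ) / 3)) + α * t ^ ((1 : ℝ) / 3) / (3 * n ^ ((2 : ℝ) / 3))
        + α ^ 2 / (6 * n)
      = ((t ^ ((1 : ℝ) / 3) * n ^ ((1 : ℝ) / 3)) ^ 2
          + 2 * α * (t ^ ((1 : ℝ) / 3) * n ^ ((1 : ℝ) / 3)) / 3 + α ^ 2 / 3) / (2 * n) := by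
  have hτ2 := rpow_div_three_eq_pow ht 2
  have hν2 := rpow_div_three_eq_pow hn.le 2
  have hν3 : (n ^ ((1 : ℝ) / 3)) ^ 3 = n := by rw [← rpow_div_three_eq_pow hn.le 3]; norm_num
  simp only [Nat.cast_ofNat] at hτ2 hν2
  rw [hτ2, hν2]
  set ν := n ^ ((1 : ℝ) / 3)
  have hν0 : 0 < ν := by positivity
  rw [← hν3]
  field_simp
  ring

theorem exists_abs_smaller_endpoint_sub_le (α : ℝ) {t : ℝ} (ht : 0 < t) :
    ∃ n₀ C, 0 < C ∧ ∀ n ≥ n₀, ∀ a b, 0 < a → a < b →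
      endpointFun α t √(a * b) = t * n → a + b = 2 * n + 2 * t / √(a * b) →
      |a - (t ^ ((2 : ℝ) / 3) / (2 * n ^ ((1 : ℝ) / 3))
            + α * t ^ ((1 : ℝ) / 3) / (3 * n ^ ((2 : ℝ) / 3)) + α ^ 2 / (6 * n))|
        ≤ C * n ^ (-(4 : ℝ) / 3) := by
  obtain ⟨u₀, K, hK, hroot⟩ := exists_endpointFun_root_sq_approx α t
  set τ := t ^ ((1 : ℝ) / 3) with hτ
  have hτ0 : 0 < τ := by positivity
  have hτ3 : τ ^ 3 = t := by rw [hτ, ← rpow_div_three_eq_pow ht.le 3]; norm_num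
  refine ⟨max 1 (u₀ / τ) ^ 3, 9 * τ ^ 4 + K / (2 * τ), by positivity,
    fun n hn a b ha hab hφ hsum => ?_⟩
  have hn0 : 0 < n := lt_of_lt_of_le (by positivity) hn
  set ν := n ^ ((1 : ℝ) / 3) with hν
  have hν0 : 0 < ν := by positivity
  have hν3 : ν ^ 3 = n := by rw [hν, ← rpow_div_three_eq_pow hn0.le 3]; norm_num
  obtain ⟨hν1, hu₀⟩ : 1 ≤ ν ∧ u₀ / τ ≤ ν :=
    max_le_iff.1 (le_of_pow_le_pow_left₀ (by norm_num) hν0.le (hν3 ▸ hn))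
  have hcube : (τ * ν) ^ 3 = t * n := by rw [mul_pow, hτ3, hν3]
  have hs : 0 < √(a * b) := Real.sqrt_pos.2 (mul_pos ha (ha.trans hab))
  obtain ⟨hs2u, hsq⟩ := hroot (τ * ν) ((div_le_iff₀' hτ0).1 hu₀) _ hs (hφ.trans hcube.symm)
  have hestimate := abs_smaller_endpoint_sub_le_of_sq_approx ht (by positivity) hn0 hs hcube
    hs2u hsq ha hab.le (Real.sq_sqrt (mul_pos ha (ha.trans hab)).le).symm hsum
  have hν4 : n ^ (-(4 : ℝ) / 3) = (ν ^ 4)⁻¹ := by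
    rw [neg_div, rpow_neg hn0.le]
    simpa only [Nat.cast_ofNat] using congrArg (·⁻¹) (rpow_div_three_eq_pow hn0.le 4)
  have hbound : 9 * t * (τ * ν) / n ^ 2 + K / (2 * n * (τ * ν))
      ≤ (9 * τ ^ 4 + K / (2 * τ)) * (ν ^ 4)⁻¹ := by
    have hν45 : ν ^ 4 ≤ ν ^ 5 := pow_le_pow_right₀ hν1 (by norm_num)
    calc _ = 9 * τ ^ 4 / ν ^ 5 + K / (2 * τ) / ν ^ 4 := by
          rw [← hν3, ← hτ3]; field_simp
      _ ≤ 9 * τ ^ 4 / ν ^ 4 + K / (2 * τ) / ν ^ 4 := by gcongr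
      _ = _ := by ring
  rw [leading_terms_eq_div α ht.le hn0, hν4]
  exact hestimate.trans hbound

theorem coulomb_fluid_lower_endpoint_asymptotics_general
    (α t : ℝ) (ht : 0 < t)
    (a b : ℕ → ℝ)
    (hab : ∀ N : ℕ, 0 < a N ∧ a N < b N)
    (hcond1 : ∀ N : ℕ,
      t * (a N + b N) / (2 * (a N * b N) ^ ((3 : ℝ) / 2))
        + α / Real.sqrt (a N * b N) = 1)
    (hcond2 : ∀ N : ℕ,
      (a N + b N) / 2 - t / Real.sqrt (a N * b N) - α = 2 * (N : ℝ)) :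
    ∃ C : ℝ, 0 < C ∧ ∃ N₀ : ℕ, ∀ N : ℕ, N₀ ≤ N →
      |a N -
          (t ^ ((2 : ℝ) / 3) / (2 * (2 * (N : ℝ) + α) ^ ((1 : ℝ) / 3))
            + α * t ^ ((1 : ℝ) / 3) / (3 * (2 * (N : ℝ) + α) ^ ((2 : ℝ) / 3))
            + α ^ 2 / (6 * (2 * (N : ℝ) + α)))|
        ≤ C * (2 * (N : ℝ) + α) ^ (-(4 : ℝ) / 3) := by
  obtain ⟨n₀, C, hC, hbound⟩ := exists_abs_smaller_endpoint_sub_le α ht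
  have hn : Tendsto (fun N : ℕ => 2 * (N : ℝ) + α) atTop atTop :=
    tendsto_atTop_add_const_right _ α (tendsto_natCast_atTop_atTop.const_mul_atTop two_pos)
  obtain ⟨N₀, hN₀⟩ := eventually_atTop.1 (hn.eventually_ge_atTop n₀)
  refine ⟨C, hC, N₀, fun N hN => ?_⟩
  obtain ⟨ha, hab⟩ := hab N
  obtain ⟨hφ, hsum⟩ :=
    endpointFun_sqrt_eq_of_endpoint_conditions ha (ha.trans hab) (hcond1 N) (hcond2 N)
  exact hbound _ (hN₀ N hN) _ _ ha hab hφ hsum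

theorem coulomb_fluid_lower_endpoint_asymptotics
    (α t : ℝ) (hα : -1 < α) (ht : 0 < t)
    (a b : ℕ → ℝ)
    (hab : ∀ N : ℕ, 0 < a N ∧ a N < b N)
    (hcond1 : ∀ N : ℕ,
      t * (a N + b N) / (2 * (a N * b N) ^ ((3 : ℝ) / 2))
        + α / Real.sqrt (a N * b N) = 1)
    (hcond2 : ∀ N : ℕ,
      (a N + b N) / 2 - t / Real.sqrt (a N * b N) - α = 2 * (N : ℝ))
    (ha0 : Tendsto a atTop (nhds 0)) :
    ∃ C : ℝ, 0 < C ∧ ∃ N₀ : ℕ, ∀ N : ℕ, N₀ ≤ N →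
      |a N -
          (t ^ ((2 : ℝ) / 3) / (2 * (2 * (N : ℝ) + α) ^ ((1 : ℝ) / 3))
            + α * t ^ ((1 : ℝ) / 3) / (3 * (2 * (N : ℝ) + α) ^ ((2 : ℝ) / 3))
            + α ^ 2 / (6 * (2 * (N : ℝ) + α)))|
        ≤ C * (2 * (N : ℝ) + α) ^ (-(4 : ℝ) / 3) :=
  coulomb_fluid_lower_endpoint_asymptotics_general α t ht a b hab hcond1 hcond2
end

section
/- Fix α > −1, t ≥ 0 and an integer N ≥ 0. The smallest eigenvalue λ_N of the Hankel matrix H_N admits the lower bound λ_N ≥ 2π / Σ_{k=0}^N 𝒦_{kk}, where 𝒦_{kk} := ∫_{−π}^{π} |𝒫_k(e^{iφ})|² dφ and 𝒫_k are the orthonormal polynomials with respect to w_α(x;t). -/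
open Real Filter MeasureTheory intervalIntegral

/-- The singularly perturbed Laguerre weight `w_α(x;t) = x^α e^{-x - t/x}`. -/
noncomputable def pertLaguerreWeight (α t x : ℝ) : ℝ := x ^ α * Real.exp (-x - t / x)

/-- The moments `μ_j(t) = ∫₀^∞ x^j w_α(x;t) dx`. -/
noncomputable def pertLaguerreMoment (α t : ℝ) (j : ℕ) : ℝ :=
  ∫ x in Set.Ioi (0 : ℝ), x ^ j * pertLaguerreWeight α t x

/-- The Hankel matrix `H_N = (μ_{j+k}(t))_{j,k=0}^N`. -/
noncomputable def pertLaguerreHankel (α t : ℝ) (N : ℕ) :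
    Matrix (Fin (N + 1)) (Fin (N + 1)) ℝ :=
  Matrix.of fun j k => pertLaguerreMoment α t ((j : ℕ) + (k : ℕ))

/-- The diagonal entries `𝒦_{kk} = ∫_{-π}^{π} |𝒫_k(e^{iφ})|² dφ`. -/
noncomputable def circleKdiag (P : ℕ → Polynomial ℝ) (k : ℕ) : ℝ :=
  ∫ φ in (-Real.pi)..Real.pi,
    ‖(Polynomial.aeval (Complex.exp (φ * Complex.I))) (P k)‖ ^ 2

/-!
Let `H v = λ v` with `v ≠ 0` and put `Q(x) = ∑ⱼ vⱼ xʲ`. Then `λ ‖v‖² = vᵀ H v = ∫ Q² w`, and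
expanding `Q = ∑ₖ cₖ 𝒫ₖ` in the orthonormal polynomials gives `λ ‖v‖² = ∑ₖ cₖ²`. On the unit
circle, Parseval gives `∫_{-π}^{π} |Q(e^{iφ})|² dφ = 2π ‖v‖²`, while Cauchy–Schwarz applied to
`Q = ∑ₖ cₖ 𝒫ₖ` bounds the same integral by `(∑ₖ cₖ²) ∑ₖ 𝒦ₖₖ = λ ‖v‖² ∑ₖ 𝒦ₖₖ`.
Hence `2π ≤ λ ∑ₖ 𝒦ₖₖ`.
-/

open Polynomial Complex
open scoped Matrix ComplexConjugate

section Hankel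

variable {R : Type*} [CommRing R] (L : R[X] →ₗ[R] R)

noncomputable def hankelMatrix (n : ℕ) : Matrix (Fin n) (Fin n) R :=
  Matrix.of fun j k => L (X ^ ((j : ℕ) + k))

theorem dotProduct_hankelMatrix_mulVec [DecidableEq R] {n : ℕ} (v : Fin n → R) :
    v ⬝ᵥ (hankelMatrix L n *ᵥ v) = L (ofFn n v ^ 2) := by
  rw [ofFn_eq_sum_monomial, sq, Finset.sum_mul_sum, map_sum]
  refine Finset.sum_congr rfl fun j _ => ?_
  rw [Matrix.mulVec, dotProduct, Finset.mul_sum, map_sum]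
  refine Finset.sum_congr rfl fun k _ => ?_
  rw [← smul_X_eq_monomial, ← smul_X_eq_monomial, smul_mul_smul_comm, ← pow_add, map_smul,
    hankelMatrix, Matrix.of_apply, smul_eq_mul]
  ring

theorem map_sum_smul_sq_of_orthonormal {P : ℕ → R[X]}
    (horth : ∀ m n, L (P m * P n) = if m = n then 1 else 0) (s : Finset ℕ) (c : ℕ → R) :
    L ((∑ k ∈ s, c k • P k) ^ 2) = ∑ k ∈ s, c k ^ 2 := by
  rw [sq, Finset.sum_mul_sum, map_sum]
  refine Finset.sum_congr rfl fun k hk => ?_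
  simp only [smul_mul_smul_comm, map_sum, map_smul, horth, smul_eq_mul, mul_ite, mul_one, mul_zero,
    Finset.sum_ite_eq, hk, if_true, sq]

end Hankel

theorem exists_eq_sum_smul_of_degree_lt {K : Type*} [Field K] {P : ℕ → K[X]}
    (hdeg : ∀ n, (P n).degree = n) {m : ℕ} {q : K[X]} (hq : q.degree < m) :
    ∃ c : ℕ → K, q = ∑ k ∈ Finset.range m, c k • P k := by
  let S : Polynomial.Sequence K := ⟨P, hdeg⟩
  have hspan := S.span_degreeLT (m := m) fun i _ =>
    (leadingCoeff_ne_zero.2 (S.ne_zero i)).isUnit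
  rw [← mem_degreeLT, ← hspan, Finsupp.mem_span_image_iff_linearCombination] at hq
  obtain ⟨l, hl, rfl⟩ := hq
  refine ⟨l, ?_⟩
  rw [Finsupp.linearCombination_apply, Finsupp.sum_of_support_subset l (s := Finset.range m)
    (fun k hk => by simpa using hl hk) (fun k a => a • P k) fun _ _ => zero_smul K _]

theorem integral_cos_intCast_mul (m : ℤ) :
    ∫ φ in -π..π, Real.cos (m * φ) = if m = 0 then 2 * π else 0 := by
  split_ifs with hm
  · simp [hm, two_mul]
  · have hm' : (m : ℝ) ≠ 0 := Int.cast_ne_zero.2 hm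
    rw [intervalIntegral.integral_comp_mul_left Real.cos hm', integral_cos, mul_neg,
      Real.sin_neg, Real.sin_int_mul_pi]
    simp

theorem re_exp_mul_I_pow_mul_conj_pow (φ : ℝ) (j k : ℕ) :
    (exp (φ * I) ^ j * conj (exp (φ * I) ^ k)).re = Real.cos (((j : ℤ) - k : ℤ) * φ) := by
  have hexponent : (j : ℂ) * (φ * I) + conj ((k : ℂ) * (φ * I)) =
      ((((j : ℤ) - k : ℤ) * φ : ℝ) : ℂ) * I := by
    simp only [map_mul, map_natCast, conj_ofReal, conj_I]
    push_cast
    ring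
  rw [← Complex.exp_nat_mul, ← Complex.exp_nat_mul, ← exp_conj, ← Complex.exp_add, hexponent,
    exp_ofReal_mul_I_re]

theorem norm_aeval_exp_mul_I_ofFn_sq {n : ℕ} (v : Fin n → ℝ) (φ : ℝ) :
    ‖aeval (exp (φ * I)) (ofFn n v)‖ ^ 2 =
      ∑ j, ∑ k, v j * v k * Real.cos (((j : ℤ) - k : ℤ) * φ) := by
  rw [← Complex.normSq_eq_norm_sq, ← Complex.ofReal_re (normSq _), ← Complex.mul_conj,
    ofFn_eq_sum_monomial, map_sum, map_sum, Finset.sum_mul_sum, Complex.re_sum]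
  refine Finset.sum_congr rfl fun j _ => ?_
  rw [Complex.re_sum]
  refine Finset.sum_congr rfl fun k _ => ?_
  simp only [aeval_monomial, Complex.coe_algebraMap, map_mul, Complex.conj_ofReal]
  rw [mul_mul_mul_comm, ← Complex.ofReal_mul, Complex.re_ofReal_mul,
    re_exp_mul_I_pow_mul_conj_pow]

theorem integral_norm_aeval_exp_mul_I_ofFn_sq {n : ℕ} (v : Fin n → ℝ) :
    ∫ φ in -π..π, ‖aeval (exp (φ * I)) (ofFn n v)‖ ^ 2 = 2 * π * ∑ j, v j ^ 2 := by
  simp_rw [norm_aeval_exp_mul_I_ofFn_sq]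
  rw [intervalIntegral.integral_finsetSum fun j _ =>
    (by fun_prop : Continuous _).intervalIntegrable _ _, Finset.mul_sum]
  refine Finset.sum_congr rfl fun j _ => ?_
  rw [intervalIntegral.integral_finsetSum fun k _ =>
    (by fun_prop : Continuous _).intervalIntegrable _ _]
  simp only [intervalIntegral.integral_const_mul, integral_cos_intCast_mul, sub_eq_zero,
    Nat.cast_inj, Fin.val_inj, mul_ite, mul_zero, Finset.sum_ite_eq, Finset.mem_univ, if_true]
  ring

theorem norm_sum_smul_sq_le {ι E : Type*} [SeminormedAddCommGroup E] [NormedSpace ℝ E]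
    (s : Finset ι) (c : ι → ℝ) (w : ι → E) :
    ‖∑ i ∈ s, c i • w i‖ ^ 2 ≤ (∑ i ∈ s, c i ^ 2) * ∑ i ∈ s, ‖w i‖ ^ 2 := by
  calc ‖∑ i ∈ s, c i • w i‖ ^ 2 ≤ (∑ i ∈ s, |c i| * ‖w i‖) ^ 2 := by
        gcongr
        exact (norm_sum_le _ _).trans_eq (by simp only [norm_smul, Real.norm_eq_abs])
    _ ≤ (∑ i ∈ s, |c i| ^ 2) * ∑ i ∈ s, ‖w i‖ ^ 2 := Finset.sum_mul_sq_le_sq_mul_sq _ _ _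
    _ = (∑ i ∈ s, c i ^ 2) * ∑ i ∈ s, ‖w i‖ ^ 2 := by simp only [sq_abs]

theorem continuous_norm_aeval_exp_mul_I_sq (p : ℝ[X]) :
    Continuous fun φ : ℝ => ‖aeval (exp (φ * I)) p‖ ^ 2 := by
  have := p.continuous_aeval (R := ℝ) (A := ℂ)
  fun_prop

theorem circleKdiag_nonneg (P : ℕ → ℝ[X]) (k : ℕ) : 0 ≤ circleKdiag P k :=
  intervalIntegral.integral_nonneg (by linarith [Real.pi_pos]) fun _ _ => by positivity

theorem integral_norm_aeval_exp_mul_I_sum_smul_sq_le (P : ℕ → ℝ[X]) (s : Finset ℕ)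
    (c : ℕ → ℝ) :
    ∫ φ in -π..π, ‖aeval (exp (φ * I)) (∑ k ∈ s, c k • P k)‖ ^ 2 ≤
      (∑ k ∈ s, c k ^ 2) * ∑ k ∈ s, circleKdiag P k := by
  have hcont := continuous_norm_aeval_exp_mul_I_sq
  unfold circleKdiag
  rw [← intervalIntegral.integral_finsetSum fun k _ => (hcont (P k)).intervalIntegrable _ _,
    ← intervalIntegral.integral_const_mul]
  refine intervalIntegral.integral_mono_on (by linarith [Real.pi_pos])
    ((hcont _).intervalIntegrable _ _)
    ((continuous_const.mul (continuous_finsetSum s fun k _ => hcont (P k))).intervalIntegrable _ _)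
    fun φ _ => ?_
  simp only [map_sum, map_smul]
  exact norm_sum_smul_sq_le s c _

theorem two_pi_le_mul_sum_circleKdiag (L : ℝ[X] →ₗ[ℝ] ℝ) {P : ℕ → ℝ[X]}
    (hdeg : ∀ n, (P n).degree = n) (horth : ∀ m n, L (P m * P n) = if m = n then 1 else 0)
    {n : ℕ} {lam : ℝ} {v : Fin n → ℝ} (hv : v ≠ 0) (heig : hankelMatrix L n *ᵥ v = lam • v) :
    2 * π ≤ lam * ∑ k ∈ Finset.range n, circleKdiag P k := by
  classical
  obtain ⟨c, hc⟩ := exists_eq_sum_smul_of_degree_lt hdeg (ofFn_degree_lt v)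
  have hv2 : 0 < ∑ j, v j ^ 2 := by
    obtain ⟨j, hj⟩ := Function.ne_iff.1 hv
    exact Finset.sum_pos' (fun i _ => sq_nonneg _) ⟨j, Finset.mem_univ j, sq_pos_of_ne_zero hj⟩
  have hquad : lam * ∑ j, v j ^ 2 = ∑ k ∈ Finset.range n, c k ^ 2 := by
    rw [← map_sum_smul_sq_of_orthonormal L horth, ← hc, ← dotProduct_hankelMatrix_mulVec, heig,
      dotProduct_smul, smul_eq_mul]
    simp only [dotProduct, sq]
  have hcircle : 2 * π * ∑ j, v j ^ 2 ≤
      (lam * ∑ j, v j ^ 2) * ∑ k ∈ Finset.range n, circleKdiag P k := by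
    rw [← integral_norm_aeval_exp_mul_I_ofFn_sq, hquad, hc]
    exact integral_norm_aeval_exp_mul_I_sum_smul_sq_le P _ c
  exact le_of_mul_le_mul_right (hcircle.trans_eq (by ring)) hv2

theorem integrableOn_pow_mul_pertLaguerreWeight {α t : ℝ} (hα : -1 < α) (ht : 0 ≤ t) (n : ℕ) :
    IntegrableOn (fun x => x ^ n * pertLaguerreWeight α t x) (Set.Ioi 0) := by
  have hGamma : IntegrableOn (fun x : ℝ => Real.exp (-x) * x ^ ((n : ℝ) + α)) (Set.Ioi 0) := by
    simpa using
      Real.GammaIntegral_convergent (s := n + α + 1) (by linarith [n.cast_nonneg (α := ℝ)])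
  refine hGamma.mono' (by unfold pertLaguerreWeight; fun_prop) ?_
  filter_upwards [ae_restrict_mem measurableSet_Ioi] with x (hx : 0 < x)
  have hexp : Real.exp (-x - t / x) ≤ Real.exp (-x) :=
    Real.exp_le_exp.2 (by linarith [div_nonneg ht hx.le])
  rw [Real.norm_of_nonneg (by unfold pertLaguerreWeight; positivity), pertLaguerreWeight,
    Real.rpow_add hx, Real.rpow_natCast, ← mul_assoc, mul_comm (Real.exp _)]
  gcongr

theorem integrableOn_eval_mul_pertLaguerreWeight {α t : ℝ} (hα : -1 < α) (ht : 0 ≤ t)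
    (p : ℝ[X]) :
    IntegrableOn (fun x => p.eval x * pertLaguerreWeight α t x) (Set.Ioi 0) := by
  induction p using Polynomial.induction_on' with
  | add p q hp hq =>
    simp only [eval_add, add_mul]
    exact hp.add hq
  | monomial n a =>
    simp only [eval_monomial, mul_assoc]
    exact (integrableOn_pow_mul_pertLaguerreWeight hα ht n).const_mul a

noncomputable def weightedIntegralFunctional (μ : Measure ℝ) (w : ℝ → ℝ)
    (hw : ∀ p : ℝ[X], Integrable (fun x => p.eval x * w x) μ) : ℝ[X] →ₗ[ℝ] ℝ where
  toFun p := ∫ x, p.eval x * w x ∂μ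
  map_add' p q := by simp only [eval_add, add_mul]; exact integral_add (hw p) (hw q)
  map_smul' a p := by simp only [eval_smul, smul_eq_mul, mul_assoc]; exact integral_const_mul a _

theorem smallest_eigenvalue_lower_bound_general
    (α t : ℝ) (hα : -1 < α) (ht : 0 ≤ t) (N : ℕ)
    (P : ℕ → Polynomial ℝ)
    (hdeg : ∀ n : ℕ, (P n).degree = n)
    (horth : ∀ m n : ℕ,
      (∫ x in Set.Ioi (0 : ℝ), (P m).eval x * (P n).eval x * pertLaguerreWeight α t x)
        = if m = n then 1 else 0)
    (lam : ℝ)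
    (hlam : IsLeast
      {r : ℝ | ∃ v : Fin (N + 1) → ℝ, v ≠ 0 ∧
        (pertLaguerreHankel α t N).mulVec v = r • v} lam) :
    lam ≥ 2 * Real.pi / ∑ k ∈ Finset.range (N + 1), circleKdiag P k := by
  let L := weightedIntegralFunctional (volume.restrict (Set.Ioi 0)) (pertLaguerreWeight α t)
    (integrableOn_eval_mul_pertLaguerreWeight hα ht)
  have hHankel : pertLaguerreHankel α t N = hankelMatrix L (N + 1) := by
    ext j k
    simp [pertLaguerreHankel, hankelMatrix, L, weightedIntegralFunctional, pertLaguerreMoment]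
  have hL : ∀ m n, L (P m * P n) = if m = n then 1 else 0 := fun m n => by
    simpa [L, weightedIntegralFunctional] using horth m n
  obtain ⟨v, hv, heig⟩ := hlam.1
  have h2pi := two_pi_le_mul_sum_circleKdiag L hdeg hL hv (hHankel ▸ heig)
  have hK : 0 < ∑ k ∈ Finset.range (N + 1), circleKdiag P k := by
    refine (Finset.sum_nonneg fun k _ => circleKdiag_nonneg P k).lt_of_ne fun hK => ?_
    rw [← hK, mul_zero] at h2pi
    linarith [Real.pi_pos]
  rw [ge_iff_le, div_le_iff₀ hK]
  exact h2pi

theorem smallest_eigenvalue_lower_bound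
    (α t : ℝ) (hα : -1 < α) (ht : 0 ≤ t) (N : ℕ)
    (P : ℕ → Polynomial ℝ)
    (hdeg : ∀ n : ℕ, (P n).degree = n)
    (hlead : ∀ n : ℕ, 0 < (P n).leadingCoeff)
    (horth : ∀ m n : ℕ,
      (∫ x in Set.Ioi (0 : ℝ), (P m).eval x * (P n).eval x * pertLaguerreWeight α t x)
        = if m = n then 1 else 0)
    (lam : ℝ)
    (hlam : IsLeast
      {r : ℝ | ∃ v : Fin (N + 1) → ℝ, v ≠ 0 ∧
        (pertLaguerreHankel α t N).mulVec v = r • v} lam) :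
    lam ≥ 2 * Real.pi / ∑ k ∈ Finset.range (N + 1), circleKdiag P k :=
  smallest_eigenvalue_lower_bound_general α t hα ht N P hdeg horth lam hlam
end

section
/- Let 0 < a < b and t ≥ 0. Then ∫_a^b log(x + t) / ( x √((b−x)(x−a)) ) dx = (π/√(ab)) · log[ ( (√(ab) + √((t+a)(t+b)))² − t² ) / (√a + √b)² ]. -/
/-!
Substituting `x = (a + b) / 2 + (b - a) / 2 * sin θ` turns `dx / √((b - x) (x - a))` into `dθ`
on `(-π/2, π/2)`, and every integral that occurs then reduces to
`∫ dθ / (c + e sin θ) = π / √(c² - e²)`. Differentiating in `t` under the integral sign and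
splitting `1 / ((x + s) x)` into partial fractions gives the derivative
`(π / s) (1 / √(a b) - 1 / √((s + a) (s + b)))`, a primitive of which is
`(π / √(a b)) log ((√(a b) + √((s + a) (s + b)))² - s²)`. The value at `t = 0` comes from the
symmetry `x ↦ a b / x` of the weight, which reduces it to
`∫ log (m + r sin θ) dθ = π log ((m + √(m² - r²)) / 2)`, itself found by differentiating in `r`.
-/

open Real intervalIntegral Set

theorem integral_integral_swap_of_continuousOn {f : ℝ → ℝ → ℝ} {a b c d : ℝ}
    (hab : a ≤ b) (hcd : c ≤ d)
    (hf : ContinuousOn (Function.uncurry f) (Icc a b ×ˢ Icc c d)) :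
    ∫ x in a..b, ∫ y in c..d, f x y = ∫ y in c..d, ∫ x in a..b, f x y := by
  simp only [integral_of_le hab, integral_of_le hcd]
  apply MeasureTheory.integral_integral_swap
  rw [MeasureTheory.Measure.prod_restrict, ← MeasureTheory.Measure.volume_eq_prod]
  exact (hf.integrableOn_compact (isCompact_Icc.prod isCompact_Icc)).mono_set
    (prod_mono Ioc_subset_Icc_self Ioc_subset_Icc_self)

theorem integral_sub_eq_integral_integral_of_hasDerivAt {F F' : ℝ → ℝ → ℝ} {a b u v : ℝ}
    (hab : a ≤ b) (huv : u ≤ v)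
    (hF : ∀ s ∈ Icc u v, ∀ θ ∈ Icc a b, HasDerivAt (F · θ) (F' s θ) s)
    (hF' : ContinuousOn (Function.uncurry F') (Icc u v ×ˢ Icc a b)) :
    ∫ θ in a..b, (F v θ - F u θ) = ∫ s in u..v, ∫ θ in a..b, F' s θ := by
  rw [integral_integral_swap_of_continuousOn huv hab hF']
  refine integral_congr fun θ hθ => ?_
  rw [uIcc_of_le hab] at hθ
  refine (integral_eq_sub_of_hasDerivAt (fun s hs => hF s ?_ θ hθ) ?_).symm
  · rwa [uIcc_of_le huv] at hs
  · apply ContinuousOn.intervalIntegrable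
    rw [uIcc_of_le huv]
    exact hF'.comp (continuous_id.prodMk continuous_const).continuousOn fun s hs => ⟨hs, hθ⟩

theorem add_mul_sin_pos {c e : ℝ} (h : |e| < c) (θ : ℝ) : 0 < c + e * sin θ := by
  have : |e * sin θ| ≤ |e| := by
    rw [abs_mul]; exact mul_le_of_le_one_right (abs_nonneg e) (abs_sin_le_one θ)
  linarith [neg_abs_le (e * sin θ)]

theorem integral_inv_add_mul_sin {c e : ℝ} (h : |e| < c) :
    ∫ θ in -(π / 2)..π / 2, (c + e * sin θ)⁻¹ = π / √(c ^ 2 - e ^ 2) := by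
  obtain ⟨hec, hce⟩ := abs_lt.mp h
  set d := √(c ^ 2 - e ^ 2)
  have hd2 : d ^ 2 = c ^ 2 - e ^ 2 := sq_sqrt (by nlinarith)
  have hd : 0 < d := sqrt_pos.mpr (by nlinarith)
  have hpos := add_mul_sin_pos h
  -- Weierstrass substitution `u = tan (θ / 2)`.
  have hderiv : ∀ θ ∈ uIcc (-(π / 2)) (π / 2),
      HasDerivAt (fun θ => 2 / d * arctan ((c * tan (θ / 2) + e) / d)) (c + e * sin θ)⁻¹ θ := by
    intro θ hθ
    rw [uIcc_of_le (by linarith [pi_pos])] at hθ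
    have hcos : cos (θ / 2) ≠ 0 :=
      (cos_pos_of_mem_Ioo ⟨by linarith [hθ.1, pi_pos], by linarith [hθ.2, pi_pos]⟩).ne'
    have htan : HasDerivAt (fun y => tan (y / 2)) (1 / cos (θ / 2) ^ 2 * (1 / 2)) θ := by
      simpa [Function.comp_def] using
        (hasDerivAt_tan hcos).comp θ ((hasDerivAt_id θ).div_const 2)
    refine ((((htan.const_mul c).add_const e).div_const d).arctan.const_mul (2 / d)).congr_deriv ?_
    have hsin : sin θ = 2 * sin (θ / 2) * cos (θ / 2) := by
      rw [← sin_two_mul, mul_div_cancel₀ θ two_ne_zero]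
    have hne := hpos θ
    rw [hsin] at hne ⊢
    rw [tan_eq_sin_div_cos]
    field_simp
    rw [eq_div_iff (ne_of_gt (by linarith))]
    linear_combination -cos (θ / 2) ^ 2 * hd2 - c ^ 2 * sin_sq_add_cos_sq (θ / 2)
  have hcont : Continuous fun θ => (c + e * sin θ)⁻¹ :=
    (by fun_prop : Continuous fun θ => c + e * sin θ).inv₀ fun θ => (hpos θ).ne'
  rw [integral_eq_sub_of_hasDerivAt hderiv (hcont.intervalIntegrable _ _)]
  have hquarter : π / 2 / 2 = π / 4 := by ring
  -- `arctan x + arctan x⁻¹ = π / 2` for `x = (c + e) / d > 0`, since `(c + e) (c - e) = d ^ 2`.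
  have hinv : ((c + e) / d)⁻¹ = (c - e) / d := by
    rw [inv_div, div_eq_div_iff (by linarith) hd.ne']
    linear_combination hd2
  have harctan := arctan_inv_of_pos (show 0 < (c + e) / d by apply div_pos <;> linarith)
  rw [hinv] at harctan
  simp only [neg_div, hquarter, tan_neg, tan_pi_div_four]
  rw [show (c * -1 + e) / d = -((c - e) / d) by ring, show (c * 1 + e) / d = (c + e) / d by ring,
    arctan_neg, harctan]
  field_simp
  ring

theorem integral_sin_div_add_mul_sin {m s : ℝ} (hs : s ≠ 0) (hsm : |s| < m) :
    ∫ θ in -(π / 2)..π / 2, sin θ / (m + s * sin θ)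
      = -(π * s) / (√(m ^ 2 - s ^ 2) * (√(m ^ 2 - s ^ 2) + m)) := by
  have hm : 0 < m := (abs_nonneg s).trans_lt hsm
  have hD : 0 < √(m ^ 2 - s ^ 2) := sqrt_pos.mpr (by nlinarith [sq_abs s, abs_nonneg s])
  have hD2 : √(m ^ 2 - s ^ 2) ^ 2 = m ^ 2 - s ^ 2 :=
    sq_sqrt (by nlinarith [sq_abs s, abs_nonneg s])
  have hpos := add_mul_sin_pos hsm
  have hsplit : (fun θ => sin θ / (m + s * sin θ))
      = fun θ => s⁻¹ * (1 - m * (m + s * sin θ)⁻¹) := by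
    funext θ
    rw [← div_eq_mul_inv, one_sub_div (hpos θ).ne', add_sub_cancel_left, mul_div_assoc',
      inv_mul_cancel_left₀ hs]
  have hcont : Continuous fun θ => m * (m + s * sin θ)⁻¹ :=
    continuous_const.mul
      ((by fun_prop : Continuous fun θ => m + s * sin θ).inv₀ fun θ => (hpos θ).ne')
  rw [hsplit, integral_const_mul,
    integral_sub intervalIntegrable_const (hcont.intervalIntegrable _ _), integral_const_mul,
    integral_inv_add_mul_sin hsm, integral_const, smul_eq_mul]
  field_simp
  linear_combination 2 * hD2

theorem integral_log_add_mul_sin {m r : ℝ} (hr : 0 ≤ r) (hrm : r < m) :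
    ∫ θ in -(π / 2)..π / 2, log (m + r * sin θ) = π * log ((m + √(m ^ 2 - r ^ 2)) / 2) := by
  have hm : 0 < m := hr.trans_lt hrm
  have hpos : ∀ s ∈ Icc 0 r, ∀ θ, 0 < m + s * sin θ := fun s hs θ => by
    nlinarith [neg_one_le_sin θ, hs.1, hs.2]
  have hsqrt : ∀ s ∈ Icc 0 r, 0 < m ^ 2 - s ^ 2 := fun s hs => by nlinarith [hs.1, hs.2]
  have hF := integral_sub_eq_integral_integral_of_hasDerivAt (a := -(π / 2)) (b := π / 2)
    (F := fun s θ => log (m + s * sin θ)) (F' := fun s θ => sin θ / (m + s * sin θ))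
    (by linarith [pi_pos]) hr
    (fun s hs θ _ => by
      simpa using (((hasDerivAt_id s).mul_const (sin θ)).const_add m).log (hpos s hs θ).ne')
    (ContinuousOn.div (by fun_prop) (by fun_prop) fun p hp => (hpos p.1 hp.1 p.2).ne')
  have hlog : Continuous fun θ => log (m + r * sin θ) :=
    (by fun_prop : Continuous fun θ => m + r * sin θ).log fun θ => (hpos r ⟨hr, le_rfl⟩ θ).ne'
  simp only [zero_mul, add_zero] at hF
  rw [integral_sub (hlog.intervalIntegrable _ _) intervalIntegrable_const, integral_const,
    smul_eq_mul] at hF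
  have hinner : ∫ s in 0..r, ∫ θ in -(π / 2)..π / 2, sin θ / (m + s * sin θ)
      = ∫ s in 0..r, -(π * s) / (√(m ^ 2 - s ^ 2) * (√(m ^ 2 - s ^ 2) + m)) := by
    refine integral_congr_ae (MeasureTheory.ae_of_all _ fun s hs => ?_)
    rw [uIoc_of_le hr] at hs
    exact integral_sin_div_add_mul_sin hs.1.ne' (by rw [abs_of_pos hs.1]; linarith [hs.2])
  have hderiv : ∀ s ∈ uIcc 0 r, HasDerivAt (fun s => π * log ((m + √(m ^ 2 - s ^ 2)) / 2))
      (-(π * s) / (√(m ^ 2 - s ^ 2) * (√(m ^ 2 - s ^ 2) + m))) s := by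
    intro s hs
    rw [uIcc_of_le hr] at hs
    refine (((((hasDerivAt_pow 2 s).const_sub (m ^ 2)).sqrt (hsqrt s hs).ne').const_add m
      |>.div_const 2).log (by positivity)).const_mul π |>.congr_deriv ?_
    field_simp
    ring
  have hcont : ContinuousOn (fun s => -(π * s) / (√(m ^ 2 - s ^ 2) * (√(m ^ 2 - s ^ 2) + m)))
      (uIcc 0 r) := by
    refine ContinuousOn.div (by fun_prop) (by fun_prop) fun s hs => ?_
    rw [uIcc_of_le hr] at hs
    have hD := sqrt_pos.mpr (hsqrt s hs)
    positivity
  rw [hinner, integral_eq_sub_of_hasDerivAt hderiv hcont.intervalIntegrable] at hF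
  simp only [ne_eq, OfNat.ofNat_ne_zero, not_false_eq_true, zero_pow, sub_zero,
    sqrt_sq hm.le, add_self_div_two] at hF
  rw [show π / 2 - -(π / 2) = π by ring] at hF
  linarith

theorem integral_div_sqrt_eq_integral_comp_div {a b : ℝ} (ha : 0 < a) (hab : a < b) (f : ℝ → ℝ) :
    ∫ x in a..b, f x / √((b - x) * (x - a))
      = ∫ x in a..b, √(a * b) / x * f (a * b / x) / √((b - x) * (x - a)) := by
  have hb : 0 < b := ha.trans hab
  have hpos : ∀ x ∈ Icc a b, 0 < x := fun x hx => ha.trans_le hx.1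
  have hanti : StrictAntiOn (fun x => a * b / x) (Icc a b) := fun x hx y hy h =>
    div_lt_div_of_pos_left (by positivity) (hpos x hx) h
  have hcont : ContinuousOn (fun x => a * b / x) (Icc a b) :=
    continuousOn_const.div continuousOn_id fun x hx => (hpos x hx).ne'
  have himage : (fun x => a * b / x) '' Ioo a b = Ioo a b := by
    rw [hcont.image_Ioo_of_strictAntiOn hab.le hanti,
      mul_div_cancel_right₀ a hb.ne', mul_div_cancel_left₀ b ha.ne']
  have hderiv : ∀ x ∈ Ioo a b,
      HasDerivWithinAt (fun x => a * b / x) (-(a * b) / x ^ 2) (Ioo a b) x :=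
    fun x hx => (hasDerivAt_inv (hpos x (Ioo_subset_Icc_self hx)).ne' |>.const_mul (a * b)
      |>.congr_deriv (by ring)).hasDerivWithinAt
  rw [integral_of_le hab.le, integral_of_le hab.le, MeasureTheory.integral_Ioc_eq_integral_Ioo,
    MeasureTheory.integral_Ioc_eq_integral_Ioo]
  nth_rw 1 [← himage]
  rw [MeasureTheory.integral_image_eq_integral_abs_deriv_smul measurableSet_Ioo hderiv
    (hanti.injOn.mono Ioo_subset_Icc_self)]
  refine MeasureTheory.setIntegral_congr_fun measurableSet_Ioo fun x hxI => ?_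
  have hx := hpos x (Ioo_subset_Icc_self hxI)
  have hP : 0 < (b - x) * (x - a) := mul_pos (by linarith [hxI.2]) (by linarith [hxI.1])
  have hsqrt :
      √((b - a * b / x) * (a * b / x - a)) = √(a * b) * √((b - x) * (x - a)) / x := by
    rw [← sqrt_sq (by positivity : 0 ≤ √(a * b) * √((b - x) * (x - a)) / x), div_pow, mul_pow,
      sq_sqrt (by positivity), sq_sqrt hP.le]
    congr 1
    field_simp
  have hP' := sqrt_pos.mpr hP
  rw [smul_eq_mul, hsqrt, abs_div, abs_neg, abs_of_pos (by positivity),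
    abs_of_pos (by positivity)]
  field_simp
  rw [sq_sqrt (by positivity)]
  ring

noncomputable def sinSubst (a b θ : ℝ) : ℝ := (a + b) / 2 + (b - a) / 2 * sin θ

section sinSubst

variable {a b : ℝ}

theorem sinSubst_mem_Icc (hab : a ≤ b) (θ : ℝ) : sinSubst a b θ ∈ Icc a b := by
  unfold sinSubst
  constructor <;> nlinarith [neg_one_le_sin θ, sin_le_one θ]

@[fun_prop]
theorem continuous_sinSubst : Continuous (sinSubst a b) := by
  unfold sinSubst; fun_prop

theorem sqrt_sub_sinSubst_mul_sinSubst_sub (hab : a ≤ b) {θ : ℝ}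
    (hθ : θ ∈ Icc (-(π / 2)) (π / 2)) :
    √((b - sinSubst a b θ) * (sinSubst a b θ - a)) = (b - a) / 2 * cos θ := by
  rw [← sqrt_sq (mul_nonneg (by linarith) (cos_nonneg_of_mem_Icc hθ))]
  congr 1
  unfold sinSubst
  linear_combination (-((b - a) / 2) ^ 2) * sin_sq_add_cos_sq θ

theorem integral_div_sqrt_eq_integral_sinSubst (hab : a < b) (f : ℝ → ℝ) :
    ∫ x in a..b, f x / √((b - x) * (x - a)) = ∫ θ in -(π / 2)..π / 2, f (sinSubst a b θ) := by
  have hpi : -(π / 2) ≤ π / 2 := by linarith [pi_pos]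
  have hmono : StrictMonoOn (sinSubst a b) (Icc (-(π / 2)) (π / 2)) := fun θ hθ φ hφ h => by
    unfold sinSubst
    have := strictMonoOn_sin hθ hφ h
    gcongr
  have himage : sinSubst a b '' Ioo (-(π / 2)) (π / 2) = Ioo a b := by
    rw [continuous_sinSubst.continuousOn.image_Ioo_of_strictMonoOn hpi hmono]
    simp only [sinSubst, sin_neg, sin_pi_div_two]
    congr 1 <;> ring
  have hderiv : ∀ θ ∈ Ioo (-(π / 2)) (π / 2),
      HasDerivWithinAt (sinSubst a b) ((b - a) / 2 * cos θ) (Ioo (-(π / 2)) (π / 2)) θ :=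
    fun θ _ => (((hasDerivAt_sin θ).const_mul _).const_add _).hasDerivWithinAt
  rw [integral_of_le hab.le, integral_of_le hpi, MeasureTheory.integral_Ioc_eq_integral_Ioo,
    MeasureTheory.integral_Ioc_eq_integral_Ioo, ← himage,
    MeasureTheory.integral_image_eq_integral_abs_deriv_smul measurableSet_Ioo hderiv
      (hmono.injOn.mono Ioo_subset_Icc_self)]
  refine MeasureTheory.setIntegral_congr_fun measurableSet_Ioo fun θ hθ => ?_
  have hpos : 0 < (b - a) / 2 * cos θ := mul_pos (by linarith) (cos_pos_of_mem_Ioo hθ)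
  rw [smul_eq_mul, sqrt_sub_sinSubst_mul_sinSubst_sub hab.le (Ioo_subset_Icc_self hθ),
    abs_of_pos hpos, mul_div_cancel₀ _ hpos.ne']

theorem integral_inv_sinSubst_add (hab : a ≤ b) {s : ℝ} (hs : 0 < s + a) :
    ∫ θ in -(π / 2)..π / 2, (sinSubst a b θ + s)⁻¹ = π / √((s + a) * (s + b)) := by
  have h := integral_inv_add_mul_sin (c := (a + b) / 2 + s) (e := (b - a) / 2)
    (by rw [abs_of_nonneg (by linarith)]; linarith)
  convert h using 3
  · simp only [sinSubst]; ring
  · ring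

theorem integral_log_sinSubst_div (ha : 0 < a) (hab : a < b) :
    ∫ θ in -(π / 2)..π / 2, log (sinSubst a b θ) / sinSubst a b θ
      = π / √(a * b) * log (4 * (a * b) / (√a + √b) ^ 2) := by
  have hb : 0 < b := ha.trans hab
  have hP : ∀ θ, 0 < sinSubst a b θ := fun θ => ha.trans_le (sinSubst_mem_Icc hab.le θ).1
  have hlog : Continuous fun θ => log (sinSubst a b θ) :=
    continuous_sinSubst.log fun θ => (hP θ).ne'
  have hsymm : ∀ x ∈ uIcc a b, √(a * b) / x * (log (a * b / x) / (a * b / x))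
      = (log (a * b) - log x) / √(a * b) := fun x hx => by
    have hx : 0 < x := ha.trans_le (uIcc_of_le hab.le ▸ hx).1
    rw [log_div (by positivity) hx.ne']
    field_simp
    rw [sq_sqrt (by positivity)]
  have hquot : 4 * (a * b) / (√a + √b) ^ 2 = a * b / (((a + b) / 2 + √(a * b)) / 2) := by
    have hsum : (√a + √b) ^ 2 = 4 * (((a + b) / 2 + √(a * b)) / 2) := by
      rw [sqrt_mul ha.le]
      linear_combination sq_sqrt ha.le + sq_sqrt hb.le
    rw [hsum, mul_div_mul_left _ _ four_ne_zero]
  have hmid : ((a + b) / 2) ^ 2 - ((b - a) / 2) ^ 2 = a * b := by ring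
  calc ∫ θ in -(π / 2)..π / 2, log (sinSubst a b θ) / sinSubst a b θ
      = ∫ x in a..b, (log x / x) / √((b - x) * (x - a)) :=
        (integral_div_sqrt_eq_integral_sinSubst hab fun x => log x / x).symm
    _ = ∫ x in a..b, ((log (a * b) - log x) / √(a * b)) / √((b - x) * (x - a)) := by
        rw [integral_div_sqrt_eq_integral_comp_div ha hab]
        exact integral_congr fun x hx => by rw [hsymm x hx]
    _ = (∫ θ in -(π / 2)..π / 2, (log (a * b) - log (sinSubst a b θ))) / √(a * b) := by
        rw [integral_div_sqrt_eq_integral_sinSubst hab, integral_div]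
    _ = π / √(a * b) * log (4 * (a * b) / (√a + √b) ^ 2) := by
        rw [integral_sub intervalIntegrable_const (hlog.intervalIntegrable _ _), integral_const,
          smul_eq_mul]
        simp only [sinSubst]
        rw [integral_log_add_mul_sin (by linarith) (by linarith), hmid, hquot,
          log_div (by positivity : a * b ≠ 0) (by positivity)]
        ring

theorem sqrt_mul_add_sqrt_sq_sub_sq_pos {s : ℝ} (ha : 0 < a) (hb : 0 < b) (hs : 0 ≤ s) :
    0 < (√(a * b) + √((s + a) * (s + b))) ^ 2 - s ^ 2 := by
  have hS : 0 < √(a * b) := sqrt_pos.mpr (by positivity)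
  have hQ : s ≤ √((s + a) * (s + b)) := le_sqrt_of_sq_le (by nlinarith)
  nlinarith

theorem hasDerivAt_log_sqrt_mul_add_sqrt_sq_sub_sq {s : ℝ} (ha : 0 < a) (hb : 0 < b)
    (hs : 0 ≤ s) :
    HasDerivAt (fun s => log ((√(a * b) + √((s + a) * (s + b))) ^ 2 - s ^ 2))
      ((s + a + b) / (√((s + a) * (s + b)) * (√((s + a) * (s + b)) + √(a * b)))) s := by
  have hpoly : HasDerivAt (fun s => (s + a) * (s + b)) (2 * s + a + b) s :=
    (((hasDerivAt_id s).add_const a).mul ((hasDerivAt_id s).add_const b)).congr_deriv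
      (by simp only [id_eq]; ring)
  refine ((((hpoly.sqrt (by positivity)).const_add _).fun_pow 2).fun_sub (hasDerivAt_pow 2 s)).log
    (sqrt_mul_add_sqrt_sq_sub_sq_pos ha hb hs).ne' |>.congr_deriv ?_
  have hR := (sqrt_mul_add_sqrt_sq_sub_sq_pos ha hb hs).ne'
  field_simp
  linear_combination 2 * s * sq_sqrt (mul_pos ha hb).le
    - 2 * s * sq_sqrt (by positivity : 0 ≤ (s + a) * (s + b))

theorem integral_inv_sinSubst_add_mul_inv {s : ℝ} (ha : 0 < a) (hab : a ≤ b) (hs : 0 < s) :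
    ∫ θ in -(π / 2)..π / 2, (sinSubst a b θ + s)⁻¹ * (sinSubst a b θ)⁻¹
      = π / √(a * b)
        * ((s + a + b) / (√((s + a) * (s + b)) * (√((s + a) * (s + b)) + √(a * b)))) := by
  have hP : ∀ θ, 0 < sinSubst a b θ := fun θ => ha.trans_le (sinSubst_mem_Icc hab θ).1
  have hS : 0 < √(a * b) := sqrt_pos.mpr (by nlinarith)
  have hQ : 0 < √((s + a) * (s + b)) := sqrt_pos.mpr (by nlinarith)
  have hsplit : ∀ θ, (sinSubst a b θ + s)⁻¹ * (sinSubst a b θ)⁻¹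
      = s⁻¹ * ((sinSubst a b θ + 0)⁻¹ - (sinSubst a b θ + s)⁻¹) := fun θ => by
    have := hP θ
    field_simp
    ring
  have hcont : ∀ u, 0 ≤ u → Continuous fun θ => (sinSubst a b θ + u)⁻¹ := fun u hu =>
    (by fun_prop : Continuous fun θ => sinSubst a b θ + u).inv₀ fun θ =>
      (by linarith [hP θ] : 0 < sinSubst a b θ + u).ne'
  simp_rw [hsplit]
  rw [integral_const_mul, integral_sub ((hcont 0 le_rfl).intervalIntegrable _ _)
    ((hcont s hs.le).intervalIntegrable _ _),
    integral_inv_sinSubst_add hab (by linarith), integral_inv_sinSubst_add hab (by linarith),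
    zero_add, zero_add]
  field_simp
  linear_combination sq_sqrt (mul_nonneg (by linarith) (by linarith) : 0 ≤ (s + a) * (s + b))
    - sq_sqrt (mul_pos ha (ha.trans_le hab)).le

theorem integral_log_sinSubst_add_div_sub_integral {t : ℝ} (ha : 0 < a) (hab : a ≤ b) (ht : 0 ≤ t) :
    (∫ θ in -(π / 2)..π / 2, log (sinSubst a b θ + t) / sinSubst a b θ)
        - ∫ θ in -(π / 2)..π / 2, log (sinSubst a b θ) / sinSubst a b θ
      = π / √(a * b)
        * (log ((√(a * b) + √((t + a) * (t + b))) ^ 2 - t ^ 2) - log (4 * (a * b))) := by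
  have hb : 0 < b := ha.trans_le hab
  have hP : ∀ θ, 0 < sinSubst a b θ := fun θ => ha.trans_le (sinSubst_mem_Icc hab θ).1
  have hPs : ∀ s, 0 ≤ s → ∀ θ, 0 < sinSubst a b θ + s := fun s hs θ => by linarith [hP θ]
  have hint : ∀ s, 0 ≤ s → IntervalIntegrable
      (fun θ => log (sinSubst a b θ + s) / sinSubst a b θ) MeasureTheory.volume
      (-(π / 2)) (π / 2) := fun s hs =>
    (((by fun_prop : Continuous fun θ => sinSubst a b θ + s).log fun θ => (hPs s hs θ).ne').div
      continuous_sinSubst fun θ => (hP θ).ne').intervalIntegrable _ _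
  have hF := integral_sub_eq_integral_integral_of_hasDerivAt (a := -(π / 2)) (b := π / 2)
    (F := fun s θ => log (sinSubst a b θ + s) / sinSubst a b θ)
    (F' := fun s θ => (sinSubst a b θ + s)⁻¹ * (sinSubst a b θ)⁻¹)
    (by linarith [pi_pos]) ht
    (fun s hs θ _ => (((hasDerivAt_id s).const_add _).log (hPs s hs.1 θ).ne').div_const _
      |>.congr_deriv (by simp only [id_eq]; ring))
    (ContinuousOn.mul (ContinuousOn.inv₀ (by fun_prop) fun p hp => (hPs p.1 hp.1.1 p.2).ne')
      (ContinuousOn.inv₀ (by fun_prop) fun p _ => (hP p.2).ne'))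
  have hderiv : ∀ s ∈ uIcc 0 t, HasDerivAt
      (fun s => π / √(a * b) * log ((√(a * b) + √((s + a) * (s + b))) ^ 2 - s ^ 2))
      (π / √(a * b)
        * ((s + a + b) / (√((s + a) * (s + b)) * (√((s + a) * (s + b)) + √(a * b))))) s :=
    fun s hs =>
    (hasDerivAt_log_sqrt_mul_add_sqrt_sq_sub_sq ha hb (uIcc_of_le ht ▸ hs).1).const_mul _
  have hderiv_cont : ContinuousOn
      (fun s => π / √(a * b)
        * ((s + a + b) / (√((s + a) * (s + b)) * (√((s + a) * (s + b)) + √(a * b)))))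
      (uIcc 0 t) :=
    continuousOn_const.mul (ContinuousOn.div (by fun_prop) (by fun_prop) fun s hs => by
      have := sqrt_pos.mpr (by nlinarith [(uIcc_of_le ht ▸ hs).1] : 0 < (s + a) * (s + b))
      positivity)
  have h0 : (√(a * b) + √((0 + a) * (0 + b))) ^ 2 - 0 ^ 2 = 4 * (a * b) := by
    rw [zero_add, zero_add, ← two_mul, mul_pow, sq_sqrt (by positivity)]
    ring
  simp only [add_zero] at hF
  rw [← integral_sub (hint t ht) (by simpa using hint 0 le_rfl), hF,
    integral_congr_ae (MeasureTheory.ae_of_all _ fun s hs =>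
      integral_inv_sinSubst_add_mul_inv ha hab (uIoc_of_le ht ▸ hs).1),
    integral_eq_sub_of_hasDerivAt hderiv hderiv_cont.intervalIntegrable, h0, mul_sub]

end sinSubst

theorem integral_log_add_t_div_x_sqrt
    (a b t : ℝ) (ha : 0 < a) (hab : a < b) (ht : 0 ≤ t) :
    (∫ x in a..b, Real.log (x + t) / (x * Real.sqrt ((b - x) * (x - a))))
      = (Real.pi / Real.sqrt (a * b))
          * Real.log
              (((Real.sqrt (a * b) + Real.sqrt ((t + a) * (t + b))) ^ 2 - t ^ 2)
                / (Real.sqrt a + Real.sqrt b) ^ 2) := by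
  have hb : 0 < b := ha.trans hab
  have hC : 0 < (√a + √b) ^ 2 := by have := sqrt_pos.mpr ha; positivity
  have hX := sqrt_mul_add_sqrt_sq_sub_sq_pos ha hb ht
  calc ∫ x in a..b, log (x + t) / (x * √((b - x) * (x - a)))
      = ∫ θ in -(π / 2)..π / 2, log (sinSubst a b θ + t) / sinSubst a b θ := by
        simp_rw [← div_div]
        exact integral_div_sqrt_eq_integral_sinSubst hab fun x => log (x + t) / x
    _ = ((∫ θ in -(π / 2)..π / 2, log (sinSubst a b θ + t) / sinSubst a b θ)
          - ∫ θ in -(π / 2)..π / 2, log (sinSubst a b θ) / sinSubst a b θ)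
        + ∫ θ in -(π / 2)..π / 2, log (sinSubst a b θ) / sinSubst a b θ :=
        (sub_add_cancel _ _).symm
    _ = _ := by
        rw [integral_log_sinSubst_add_div_sub_integral ha hab.le ht,
          integral_log_sinSubst_div ha hab,
          log_div hX.ne' hC.ne', log_div (by positivity) hC.ne']
        ring
end

section
/- Let 0 < a < b and let t > −a be a real number. Then ∫_a^b dx / ( (x + t) √((b−x)(x−a)) ) = π / √((t+a)(t+b)). -/
/-!
The Möbius map `g` sending `a, b, -t` to `-1, 1, ∞` satisfies
`g' / √(1 - g²) = √((t+a)(t+b)) / ((x+t)√((b-x)(x-a)))` on `(a, b)`, so `arcsin ∘ g / √((t+a)(t+b))`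
is an antiderivative of the integrand; it increases by `(π/2 - (-π/2)) / √((t+a)(t+b))` from `a`
to `b`.
-/

open Real MeasureTheory intervalIntegral

theorem integral_eq_sub_of_hasDerivAt_of_nonneg {f f' : ℝ → ℝ} {a b : ℝ} (hab : a ≤ b)
    (hcont : ContinuousOn f (Set.Icc a b)) (hderiv : ∀ x ∈ Set.Ioo a b, HasDerivAt f (f' x) x)
    (hpos : ∀ x ∈ Set.Ioo a b, 0 ≤ f' x) : ∫ y in a..b, f' y = f b - f a :=
  integral_eq_sub_of_hasDerivAt_of_le hab hcont hderiv <|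
    (intervalIntegrable_iff_integrableOn_Ioc_of_le hab).2 <|
      integrableOn_deriv_of_nonneg hcont hderiv hpos

/-- With `P = (x - a)(t + b)` and `Q = (x - b)(t + a)` one has `P - Q = (b - a)(x + t)`, so this is
`(P + Q) / (P - Q)` and `1 - moebius² = -4PQ / (P - Q)²`. -/
noncomputable def moebius (a b t x : ℝ) : ℝ :=
  ((x - a) * (t + b) + (x - b) * (t + a)) / ((b - a) * (x + t))

section Moebius

variable {a b t x : ℝ}

theorem moebius_left (hab : a ≠ b) (hta : t + a ≠ 0) : moebius a b t a = -1 := by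
  have hba : b - a ≠ 0 := sub_ne_zero.2 hab.symm
  rw [moebius, div_eq_iff (mul_ne_zero hba (by rwa [add_comm]))]
  ring

theorem moebius_right (hab : a ≠ b) (htb : t + b ≠ 0) : moebius a b t b = 1 := by
  have hba : b - a ≠ 0 := sub_ne_zero.2 hab.symm
  rw [moebius, div_eq_iff (mul_ne_zero hba (by rwa [add_comm]))]
  ring

theorem continuousOn_moebius (hab : a ≠ b) {s : Set ℝ} (hs : ∀ x ∈ s, x + t ≠ 0) :
    ContinuousOn (moebius a b t) s :=
  ContinuousOn.div (by fun_prop) (by fun_prop) fun x hx =>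
    mul_ne_zero (sub_ne_zero.2 hab.symm) (hs x hx)

theorem one_sub_moebius_sq (hab : a ≠ b) (hxt : x + t ≠ 0) :
    1 - moebius a b t x ^ 2
      = 4 * ((t + a) * (t + b)) * ((b - x) * (x - a)) / ((b - a) * (x + t)) ^ 2 := by
  have hba : b - a ≠ 0 := sub_ne_zero.2 hab.symm
  rw [moebius]
  field_simp
  ring

theorem hasDerivAt_moebius (hab : a ≠ b) (hxt : x + t ≠ 0) :
    HasDerivAt (moebius a b t) (2 * ((t + a) * (t + b)) / ((b - a) * (x + t) ^ 2)) x := by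
  have hba : b - a ≠ 0 := sub_ne_zero.2 hab.symm
  have hnum : HasDerivAt (fun y => (y - a) * (t + b) + (y - b) * (t + a)) (2 * t + a + b) x := by
    refine ((((hasDerivAt_id x).sub_const a).mul_const (t + b)).add
      (((hasDerivAt_id x).sub_const b).mul_const (t + a))).congr_deriv ?_
    ring
  have hden : HasDerivAt (fun y => (b - a) * (y + t)) (b - a) x := by
    simpa using ((hasDerivAt_id x).add_const t).const_mul (b - a)
  refine (hnum.div hden (mul_ne_zero hba hxt)).congr_deriv ?_
  field_simp
  ring

theorem sqrt_one_sub_moebius_sq (hab : a < b) (hxt : 0 < x + t) (hD : 0 ≤ (t + a) * (t + b)) :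
    √(1 - moebius a b t x ^ 2)
      = 2 * √((t + a) * (t + b)) * √((b - x) * (x - a)) / ((b - a) * (x + t)) := by
  have hba : 0 < b - a := sub_pos.2 hab
  rw [one_sub_moebius_sq hab.ne hxt.ne', sqrt_div' _ (sq_nonneg _), sqrt_sq (by positivity),
    sqrt_mul (by positivity), sqrt_mul zero_le_four, show (4 : ℝ) = 2 ^ 2 by norm_num,
    sqrt_sq zero_le_two]

theorem hasDerivAt_arcsin_moebius (ht : -a < t) (hx : x ∈ Set.Ioo a b) :
    HasDerivAt (fun y => arcsin (moebius a b t y) / √((t + a) * (t + b)))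
      (1 / ((x + t) * √((b - x) * (x - a)))) x := by
  obtain ⟨hax, hxb⟩ := hx
  have hxt : 0 < x + t := by linarith
  have hab : a < b := hax.trans hxb
  have hba : 0 < b - a := sub_pos.2 hab
  have hD : 0 < (t + a) * (t + b) := mul_pos (by linarith) (by linarith)
  have hq : 0 < (b - x) * (x - a) := mul_pos (by linarith) (by linarith)
  have hg : 0 < 1 - moebius a b t x ^ 2 := by
    rw [one_sub_moebius_sq hab.ne hxt.ne']
    positivity
  have hg₁ : moebius a b t x ≠ 1 := by rintro h; simp [h] at hg
  have hg₂ : moebius a b t x ≠ -1 := by rintro h; simp [h] at hg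
  refine (((hasDerivAt_arcsin hg₂ hg₁).comp x
    (hasDerivAt_moebius hab.ne hxt.ne')).div_const _).congr_deriv ?_
  rw [sqrt_one_sub_moebius_sq hab hxt hD.le]
  field_simp
  exact (sq_sqrt hD.le).symm

end Moebius

theorem integral_inv_add_t_sqrt_general
    (a b t : ℝ) (hab : a < b) (ht : -a < t) :
    (∫ x in a..b, 1 / ((x + t) * Real.sqrt ((b - x) * (x - a))))
      = Real.pi / Real.sqrt ((t + a) * (t + b)) := by
  have hcont : ContinuousOn (fun y => arcsin (moebius a b t y) / √((t + a) * (t + b)))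
      (Set.Icc a b) :=
    (continuous_arcsin.comp_continuousOn <| continuousOn_moebius hab.ne fun x hx =>
      (show 0 < x + t by linarith [hx.1]).ne').div_const _
  have hpos : ∀ x ∈ Set.Ioo a b, 0 ≤ 1 / ((x + t) * √((b - x) * (x - a))) := fun x hx => by
    have : 0 < x + t := by linarith [hx.1]
    positivity
  rw [integral_eq_sub_of_hasDerivAt_of_nonneg hab.le hcont
      (fun x hx => hasDerivAt_arcsin_moebius ht hx) hpos,
    moebius_right hab.ne (by linarith), moebius_left hab.ne (by linarith),
    arcsin_one, arcsin_neg_one]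
  ring

theorem integral_inv_add_t_sqrt
    (a b t : ℝ) (ha : 0 < a) (hab : a < b) (ht : -a < t) :
    (∫ x in a..b, 1 / ((x + t) * Real.sqrt ((b - x) * (x - a))))
      = Real.pi / Real.sqrt ((t + a) * (t + b)) :=
  integral_inv_add_t_sqrt_general a b t hab ht
end
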